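/- arXiv:2004.04781 — 3 statements merged into one kernel-verified Lean document; each statement's English description precedes it below -/
import Mathlib

section
/- Let Φ(β,γ) = −2bβ³ + (4a − b² + 2)β²γ + γ³ and let LN(v₁,v₂) = (0, −(bv₁+2v₂), v₁). Then Φ(β,γ) = 0 holds for (0,β,γ) if and only if the preimage (w₁,w₂) = LN⁻¹((0,−γ,β)) satisfies abw₁³ + (b²+2a+1)w₁²w₂ + 3bw₁w₂² + 2w₂³ = 0. -/
/-!
Inverting `LN` gives `w₁ = β` and `γ = b w₁ + 2 w₂`; after this substitution `Φ` is exactly four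
times the sub-parabolic cubic, so the two vanish together.
-/

/-- Limiting normal map of a cross-cap with parameter `b`. -/
noncomputable def LN (b : ℝ) (v : ℝ × ℝ) : ℝ × ℝ × ℝ :=
  (0, -(b * v.1 + 2 * v.2), v.1)

theorem LN_eq_iff {b w₁ w₂ y z : ℝ} :
    LN b (w₁, w₂) = (0, y, z) ↔ y = -(b * w₁ + 2 * w₂) ∧ z = w₁ := by
  simp only [LN, Prod.mk.injEq, true_and]
  constructor <;> rintro ⟨h₁, h₂⟩ <;> exact ⟨h₁.symm, h₂.symm⟩

theorem foldingCubic_comp_LN {R : Type*} [CommRing R] (a b w₁ w₂ : R) :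
    -2 * b * w₁ ^ 3 + (4 * a - b ^ 2 + 2) * w₁ ^ 2 * (b * w₁ + 2 * w₂) + (b * w₁ + 2 * w₂) ^ 3 =
      4 * (a * b * w₁ ^ 3 + (b ^ 2 + 2 * a + 1) * w₁ ^ 2 * w₂ +
        3 * b * w₁ * w₂ ^ 2 + 2 * w₂ ^ 3) := by
  ring

theorem stmt4 (a b β γ w₁ w₂ : ℝ)
    (hpre : LN b (w₁, w₂) = (0, -γ, β)) :
    (-2 * b * β ^ 3 + (4 * a - b ^ 2 + 2) * β ^ 2 * γ + γ ^ 3 = 0) ↔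
      (a * b * w₁ ^ 3 + (b ^ 2 + 2 * a + 1) * w₁ ^ 2 * w₂ +
        3 * b * w₁ * w₂ ^ 2 + 2 * w₂ ^ 3 = 0) := by
  obtain ⟨hγ, rfl⟩ := LN_eq_iff.mp hpre
  obtain rfl : γ = b * β + 2 * w₂ := neg_inj.mp hγ
  rw [foldingCubic_comp_LN, mul_eq_zero_iff_left four_ne_zero]
end

section
/- Let φ(x,y) = (x, xy + p(y), ax² + bxy + y² + q(x,y)) with p(0)=p'(0)=p''(0)=0 and q vanishing to order 3 at the origin, and let f_{(η,δ)} be the folding map f_{(η,δ)}(x,y) = φ(x,y) + (⟨η,φ⟩ − δ)(⟨η,φ⟩ − δ − 1)η with η = (α,β,γ) ∈ S². If δ ≠ 0 and |δ| is sufficiently small, then the 2-jet of f_{(η,δ)} at the origin satisfies Whitney's cross-cap criterion, i.e. the vectors ∂f/∂x(0,0), ∂²f/∂y²(0,0) and ∂²f/∂x∂y(0,0) span ℝ³, so f_{(η,δ)} has a cross-cap (Whitney umbrella) singularity at the origin. -/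
open Asymptotics Filter Topology

lemma aux_one_dim (u : ℝ → ℝ) (hu : ContDiff ℝ (⊤ : ℕ∞) u)
    (hO : u =O[nhds (0:ℝ)] fun t => t ^ 3) :
    u 0 = 0 ∧ deriv u 0 = 0 ∧ deriv (deriv u) 0 = 0 := by
  have hud : Differentiable ℝ u := hu.differentiable (by simp)
  have hud' : Differentiable ℝ (deriv u) := ((contDiff_infty_iff_deriv.1 (hu.of_le (by simp))).2).differentiable (by simp)
  -- u 0 = 0
  obtain ⟨C, hC⟩ := hO.bound
  have h0 : u 0 = 0 := by
    have := hC.self_of_nhds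
    simpa using this
  -- little-o fact: t^3 = o(t)
  have hcube : (fun t : ℝ => t ^ 3) =o[nhds (0:ℝ)] fun t => t := by
    have h1 : (fun t : ℝ => t ^ 2) =o[nhds (0:ℝ)] (fun _ => (1:ℝ)) := by
      rw [isLittleO_one_iff]
      have : ContinuousAt (fun t : ℝ => t ^ 2) 0 := by fun_prop
      simpa using this.tendsto
    have h2 := h1.mul_isBigO (isBigO_refl (fun t : ℝ => t) (nhds 0))
    refine h2.congr' ?_ ?_
    · filter_upwards with t; ring
    · filter_upwards with t; ring
  -- deriv u 0 = 0
  have hd : HasDerivAt u 0 0 := by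
    rw [hasDerivAt_iff_isLittleO]
    simpa [h0] using hO.trans_isLittleO hcube
  have h1 : deriv u 0 = 0 := hd.deriv
  refine ⟨h0, h1, ?_⟩
  -- second derivative
  set c := deriv (deriv u) 0 with hc
  have hslope : Tendsto (fun t => deriv u t / t) (nhdsWithin (0:ℝ) {0}ᶜ) (nhds c) := by
    have := (hud' 0).hasDerivAt
    rw [hasDerivAt_iff_tendsto_slope] at this
    refine this.congr' ?_
    filter_upwards with t
    simp [slope_def_field, h1, div_eq_mul_inv, mul_comm]
  have hdiv : Tendsto (fun t => deriv u t / deriv (fun s : ℝ => s ^ 2) t)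
      (nhdsWithin (0:ℝ) {0}ᶜ) (nhds (c / 2)) := by
    have h2 := hslope.div_const 2
    refine h2.congr ?_
    intro t
    rw [deriv_pow_field]
    push_cast
    ring_nf
  have hlh : Tendsto (fun t => u t / t ^ 2) (nhdsWithin (0:ℝ) {0}ᶜ) (nhds (c/2)) := by
    apply deriv.lhopital_zero_nhdsNE
    · filter_upwards with t using (hud t)
    · filter_upwards [self_mem_nhdsWithin] with t (ht : t ≠ 0)
      rw [deriv_pow_field]
      simpa using ht
    · have : ContinuousAt u 0 := (hud 0).continuousAt
      simpa [h0] using (this.tendsto.mono_left nhdsWithin_le_nhds)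
    · have : ContinuousAt (fun s : ℝ => s ^ 2) 0 := by fun_prop
      simpa using (this.tendsto.mono_left nhdsWithin_le_nhds)
    · exact hdiv
  have hzero : Tendsto (fun t => u t / t ^ 2) (nhdsWithin (0:ℝ) {0}ᶜ) (nhds 0) := by
    apply squeeze_zero_norm' (a := fun t => |C| * |t|)
    · filter_upwards [hC.filter_mono nhdsWithin_le_nhds, self_mem_nhdsWithin] with t ht (ht' : t ≠ 0)
      have ht2 : (0:ℝ) < t ^ 2 := by positivity
      rw [norm_div]
      rw [div_le_iff₀ (by simpa using ht2)]
      calc ‖u t‖ ≤ C * ‖t ^ 3‖ := ht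
        _ ≤ |C| * |t| * ‖t ^ 2‖ := by
            simp only [Real.norm_eq_abs, abs_pow]
            nlinarith [le_abs_self C, abs_nonneg t, abs_nonneg C, pow_nonneg (abs_nonneg t) 3]
    · have : Tendsto (fun t : ℝ => |C| * |t|) (nhds 0) (nhds 0) := by
        have : ContinuousAt (fun t : ℝ => |C| * |t|) 0 := by fun_prop
        simpa using this.tendsto
      exact this.mono_left nhdsWithin_le_nhds
  have : c / 2 = 0 := tendsto_nhds_unique hlh hzero
  linarith

lemma aux_master (q : ℝ × ℝ → ℝ) (hq : ContDiff ℝ (⊤ : ℕ∞) q)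
    (hO : q =O[nhds (0:ℝ×ℝ)] fun v => ‖v‖ ^ 3) :
    q 0 = 0 ∧ fderiv ℝ q 0 = 0 ∧ fderiv ℝ (fderiv ℝ q) 0 = 0 := by
  have hqd : Differentiable ℝ q := hq.differentiable (by simp)
  have hqd' : Differentiable ℝ (fderiv ℝ q) :=
    (hq.fderiv_right (m := (⊤ : ℕ∞)) (by simp)).differentiable (by simp)
  obtain ⟨C, hC⟩ := hO.bound
  have h0 : q 0 = 0 := by simpa using hC.self_of_nhds
  have h1 : fderiv ℝ q 0 = 0 := by
    have hiso : (fun v : ℝ×ℝ => ‖v‖ ^ 3) =o[nhds (0:ℝ×ℝ)] fun v => v := by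
      have ha : (fun v : ℝ×ℝ => ‖v‖ ^ 2) =o[nhds (0:ℝ×ℝ)] (fun _ => (1:ℝ)) := by
        rw [isLittleO_one_iff]
        have : ContinuousAt (fun v : ℝ×ℝ => ‖v‖ ^ 2) 0 := by fun_prop
        simpa using this.tendsto
      rw [← isLittleO_norm_right]
      have hb : (fun v : ℝ×ℝ => ‖v‖) =O[nhds (0:ℝ×ℝ)] fun v => ‖v‖ :=
        isBigO_refl _ _
      have h2 := ha.mul_isBigO hb
      refine h2.congr' ?_ ?_
      · filter_upwards with t; ring
      · filter_upwards with t; ring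
    have hd : HasFDerivAt q (0 : ℝ×ℝ →L[ℝ] ℝ) 0 := by
      rw [hasFDerivAt_iff_isLittleO_nhds_zero]
      simpa [h0] using hO.trans_isLittleO hiso
    exact hd.fderiv
  refine ⟨h0, h1, ?_⟩
  set A := fderiv ℝ (fderiv ℝ q) 0 with hA
  have hdiag : ∀ w : ℝ×ℝ, A w w = 0 := by
    intro w
    set u : ℝ → ℝ := fun t => q (t • w) with hu
    have hline : ContDiff ℝ (⊤ : ℕ∞) (fun t : ℝ => t • w) := by fun_prop
    have huc : ContDiff ℝ (⊤ : ℕ∞) u := hq.comp hline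
    have huO : u =O[nhds (0:ℝ)] fun t => t ^ 3 := by
      have htend : Tendsto (fun t : ℝ => t • w) (nhds 0) (nhds (0:ℝ×ℝ)) := by
        have : ContinuousAt (fun t : ℝ => t • w) 0 := by fun_prop
        simpa using this.tendsto
      have := hO.comp_tendsto htend
      refine this.trans (IsBigO.of_bound (‖w‖^3) ?_)
      filter_upwards with t
      simp [norm_smul, mul_pow, abs_pow]
      ring_nf
      rfl
    obtain ⟨-, -, h2⟩ := aux_one_dim u huc huO
    have hderiv : deriv u = fun t => fderiv ℝ q (t • w) w := by
      funext t
      have hl : HasDerivAt (fun s : ℝ => s • w) w t := by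
        simpa using (hasDerivAt_id t).smul_const w
      exact ((hqd (t • w)).hasFDerivAt.comp_hasDerivAt t hl).deriv
    have hd2 : HasDerivAt (fun t : ℝ => fderiv ℝ q (t • w) w) (A w w) 0 := by
      have hl : HasDerivAt (fun s : ℝ => s • w) w 0 := by
        simpa using (hasDerivAt_id (0:ℝ)).smul_const w
      have hF : HasFDerivAt (fderiv ℝ q) A ((fun s : ℝ => s • w) 0) := by
        simpa using (hqd' 0).hasFDerivAt
      have := hF.comp_hasDerivAt 0 hl
      have := ((ContinuousLinearMap.apply ℝ ℝ w).hasFDerivAt).comp_hasDerivAt 0 this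
      simpa [Function.comp_def] using this
    rw [← h2, hderiv]
    exact hd2.deriv.symm
  have hsymm : ∀ v w : ℝ×ℝ, A v w = A w v := by
    intro v w
    exact (hq.contDiffAt.isSymmSndFDerivAt (by rw [minSmoothness_of_isRCLikeNormedField]; exact WithTop.coe_le_coe.mpr le_top)) v w
  refine ContinuousLinearMap.ext fun v => ContinuousLinearMap.ext fun w => ?_
  have e1 := hdiag (v + w)
  have e2 := hdiag v
  have e3 := hdiag w
  have e4 := hsymm v w
  simp only [map_add, ContinuousLinearMap.add_apply] at e1
  simp only [ContinuousLinearMap.zero_apply]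
  linarith

theorem stmt12 (a b : ℝ) (α β γ : ℝ) (hη : α ^ 2 + β ^ 2 + γ ^ 2 = 1)
    (p : ℝ → ℝ) (q : ℝ × ℝ → ℝ)
    (hp : ContDiff ℝ (⊤ : ℕ∞) p) (hq : ContDiff ℝ (⊤ : ℕ∞) q)
    (hp0 : p 0 = 0) (hp1 : deriv p 0 = 0) (hp2 : deriv (deriv p) 0 = 0)
    (hqO : q =O[nhds (0 : ℝ × ℝ)] fun v => ‖v‖ ^ 3)
    (φ : ℝ × ℝ → ℝ × ℝ × ℝ)
    (hφ : φ = fun v => (v.1, v.1 * v.2 + p v.2,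
      a * v.1 ^ 2 + b * v.1 * v.2 + v.2 ^ 2 + q v))
    (f : ℝ → ℝ × ℝ → ℝ × ℝ × ℝ)
    (hf : f = fun δ v => φ v +
      ((α * (φ v).1 + β * (φ v).2.1 + γ * (φ v).2.2 - δ) *
        (α * (φ v).1 + β * (φ v).2.1 + γ * (φ v).2.2 - δ - 1)) • (α, β, γ)) :
    ∃ ε > (0 : ℝ), ∀ δ : ℝ, δ ≠ 0 → |δ| < ε →
      LinearIndependent ℝ
        ![fderiv ℝ (f δ) (0, 0) (1, 0),
          fderiv ℝ (fun v => fderiv ℝ (f δ) v (0, 1)) (0, 0) (1, 0),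
          fderiv ℝ (fun v => fderiv ℝ (f δ) v (0, 1)) (0, 0) (0, 1)] := by
  obtain ⟨hq0, hq1, hq2⟩ := aux_master q hq hqO
  have h00 : ((0, 0) : ℝ × ℝ) = 0 := rfl
  have hq0' : q (0, 0) = 0 := by rw [h00]; exact hq0
  have hq1' : fderiv ℝ q (0, 0) = 0 := by rw [h00]; exact hq1
  have hq2' : fderiv ℝ (fderiv ℝ q) (0, 0) = 0 := by rw [h00]; exact hq2
  have hpd : Differentiable ℝ p := hp.differentiable (by simp)
  have hpd' : Differentiable ℝ (deriv p) :=
    ((contDiff_infty_iff_deriv.1 (hp.of_le (by simp))).2).differentiable (by simp)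
  have hqd : Differentiable ℝ q := hq.differentiable (by simp)
  have hqd' : Differentiable ℝ (fderiv ℝ q) :=
    (hq.fderiv_right (m := (⊤ : ℕ∞)) (by simp)).differentiable (by simp)
  refine ⟨1, one_pos, fun δ hδ _ => ?_⟩
  have hFeq : f δ = fun v : ℝ × ℝ => (v.1 + (((α * v.1 + β * (v.1 * v.2 + p v.2) + γ * (a * v.1 ^ 2 + b * v.1 * v.2 + v.2 ^ 2 + q v)) - δ) * ((α * v.1 + β * (v.1 * v.2 + p v.2) + γ * (a * v.1 ^ 2 + b * v.1 * v.2 + v.2 ^ 2 + q v)) - δ - 1)) * α, v.1 * v.2 + p v.2 + (((α * v.1 + β * (v.1 * v.2 + p v.2) + γ * (a * v.1 ^ 2 + b * v.1 * v.2 + v.2 ^ 2 + q v)) - δ) * ((α * v.1 + β * (v.1 * v.2 + p v.2) + γ * (a * v.1 ^ 2 + b * v.1 * v.2 + v.2 ^ 2 + q v)) - δ - 1)) * β, a * v.1 ^ 2 + b * v.1 * v.2 + v.2 ^ 2 + q v + (((α * v.1 + β * (v.1 * v.2 + p v.2) + γ * (a * v.1 ^ 2 + b * v.1 * v.2 + v.2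 ^ 2 + q v)) - δ) * ((α * v.1 + β * (v.1 * v.2 + p v.2) + γ * (a * v.1 ^ 2 + b * v.1 * v.2 + v.2 ^ 2 + q v)) - δ - 1)) * γ) := by
    subst hφ; subst hf
    funext v
    simp only [Prod.mk_add_mk, Prod.smul_mk, smul_eq_mul, Prod.mk.injEq]
    all_goals try refine ⟨?_, ?_, ?_⟩
    all_goals try ring
  -- step 1 : the y-partial as a function
  have step1 : (fun v => fderiv ℝ (f δ) v (0, 1)) = (fun v : ℝ × ℝ => (((((α * v.1 + β * (v.1 * v.2 + p v.2) + γ * (a * v.1 ^ 2 + b * v.1 * v.2 + v.2 ^ 2 + q v)) - δ) * (β * (v.1 + deriv p v.2) + γ * (b * v.1 + 2 * v.2 + fderiv ℝ q v (0, 1))) + ((α * v.1 + β * (v.1 * v.2 + p v.2) + γ * (a * v.1 ^ 2 + b * v.1 * v.2 + v.2 ^ 2 + q v)) - δ - 1) * (β * (v.1 + deriv p v.2) + γ * (b * v.1 + 2 * v.2 + fderiv ℝ q v (0, 1)))) * α : ℝ), ((v.1 + deriv p v.2) + (((α * v.1 + β * (v.1 * v.2 + p v.2) + γ * (a * v.1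 ^ 2 + b * v.1 * v.2 + v.2 ^ 2 + q v)) - δ) * (β * (v.1 + deriv p v.2) + γ * (b * v.1 + 2 * v.2 + fderiv ℝ q v (0, 1))) + ((α * v.1 + β * (v.1 * v.2 + p v.2) + γ * (a * v.1 ^ 2 + b * v.1 * v.2 + v.2 ^ 2 + q v)) - δ - 1) * (β * (v.1 + deriv p v.2) + γ * (b * v.1 + 2 * v.2 + fderiv ℝ q v (0, 1)))) * β : ℝ), ((b * v.1 + 2 * v.2 + fderiv ℝ q v (0, 1)) + (((α * v.1 + β * (v.1 * v.2 + p v.2) + γ * (a * v.1 ^ 2 + b * v.1 * v.2 + v.2 ^ 2 + q v)) - δ) * (β * (v.1 + deriv p v.2) + γ * (b * v.1 + 2 * v.2 + fderiv ℝ q v (0, 1))) + ((α * v.1 + β * (v.1 * v.2 + p v.2) + γ * (a * v.1 ^ 2 + b * v.1 * v.2 + v.2 ^ 2 + q v)) - δ - 1) * (β * (v.1 + deriv p v.2) + γ * (b * v.1 + 2 * v.2 + fderiv ℝ q v (0, 1)))) * γ : ℝ))) := by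
    funext v
    rw [hFeq]
    obtain ⟨L, hL, hval⟩ : ∃ L : ℝ × ℝ →L[ℝ] ℝ × ℝ × ℝ,
        HasFDerivAt (fun v : ℝ × ℝ => (v.1 + (((α * v.1 + β * (v.1 * v.2 + p v.2) + γ * (a * v.1 ^ 2 + b * v.1 * v.2 + v.2 ^ 2 + q v)) - δ) * ((α * v.1 + β * (v.1 * v.2 + p v.2) + γ * (a * v.1 ^ 2 + b * v.1 * v.2 + v.2 ^ 2 + q v)) - δ - 1)) * α, v.1 * v.2 + p v.2 + (((α * v.1 + β * (v.1 * v.2 + p v.2) + γ * (a * v.1 ^ 2 + b * v.1 * v.2 + v.2 ^ 2 + q v)) - δ) * ((α * v.1 + β * (v.1 * v.2 + p v.2) + γ * (a * v.1 ^ 2 + b * v.1 * v.2 + v.2 ^ 2 + q v)) - δ - 1)) * β, a * v.1 ^ 2 + b * v.1 * v.2 + v.2 ^ 2 + q v + (((α * v.1 + β * (v.1 * v.2 + p v.2) + γ * (a * v.1 ^ 2 + b * v.1 * v.2 + v.2 ^ 2 + q v)) - δ) * ((α * v.1 + β * (v.1 * v.2 + p v.2) + γ * (a * v.1 ^ 2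 + b * v.1 * v.2 + v.2 ^ 2 + q v)) - δ - 1)) * γ)) L v ∧ L (0, 1) = (fun v : ℝ × ℝ => (((((α * v.1 + β * (v.1 * v.2 + p v.2) + γ * (a * v.1 ^ 2 + b * v.1 * v.2 + v.2 ^ 2 + q v)) - δ) * (β * (v.1 + deriv p v.2) + γ * (b * v.1 + 2 * v.2 + fderiv ℝ q v (0, 1))) + ((α * v.1 + β * (v.1 * v.2 + p v.2) + γ * (a * v.1 ^ 2 + b * v.1 * v.2 + v.2 ^ 2 + q v)) - δ - 1) * (β * (v.1 + deriv p v.2) + γ * (b * v.1 + 2 * v.2 + fderiv ℝ q v (0, 1)))) * α : ℝ), ((v.1 + deriv p v.2) + (((α * v.1 + β * (v.1 * v.2 + p v.2) + γ * (a * v.1 ^ 2 + b * v.1 * v.2 + v.2 ^ 2 + q v)) - δ) * (β * (v.1 + deriv p v.2) + γ * (b * v.1 + 2 * v.2 + fderiv ℝ q v (0, 1))) + ((α * v.1 + β * (v.1 * v.2 + p v.2) + γ * (a * v.1 ^ 2 + b * v.1 * v.2 + v.2 ^ 2 + q v)) - δ - 1) * (β * (v.1 + deriv p v.2) + γ * (b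 * v.1 + 2 * v.2 + fderiv ℝ q v (0, 1)))) * β : ℝ), ((b * v.1 + 2 * v.2 + fderiv ℝ q v (0, 1)) + (((α * v.1 + β * (v.1 * v.2 + p v.2) + γ * (a * v.1 ^ 2 + b * v.1 * v.2 + v.2 ^ 2 + q v)) - δ) * (β * (v.1 + deriv p v.2) + γ * (b * v.1 + 2 * v.2 + fderiv ℝ q v (0, 1))) + ((α * v.1 + β * (v.1 * v.2 + p v.2) + γ * (a * v.1 ^ 2 + b * v.1 * v.2 + v.2 ^ 2 + q v)) - δ - 1) * (β * (v.1 + deriv p v.2) + γ * (b * v.1 + 2 * v.2 + fderiv ℝ q v (0, 1)))) * γ : ℝ))) v := by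
        have hfst : HasFDerivAt Prod.fst (ContinuousLinearMap.fst ℝ ℝ ℝ) v := hasFDerivAt_fst
        have hsnd : HasFDerivAt Prod.snd (ContinuousLinearMap.snd ℝ ℝ ℝ) v := hasFDerivAt_snd
        have hPd := (hfst.mul hsnd).add
          (((hpd v.2).hasDerivAt).comp_hasFDerivAt v hsnd)
        have hRd := ((((hasDerivAt_pow 2 v.1).comp_hasFDerivAt v hfst).const_mul a).add
          ((hfst.const_mul b).mul hsnd)).add
          ((hasDerivAt_pow 2 v.2).comp_hasFDerivAt v hsnd) |>.add (hqd v).hasFDerivAt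
        have hGd := ((hfst.const_mul α).add (hPd.const_mul β)).add (hRd.const_mul γ)
        have hHd := (hGd.sub_const δ).mul ((hGd.sub_const δ).sub_const 1)
        refine ⟨_, (hfst.add (hHd.mul_const α)).prodMk
          ((hPd.add (hHd.mul_const β)).prodMk (hRd.add (hHd.mul_const γ))), ?_⟩
        simp only [ContinuousLinearMap.prod_apply, ContinuousLinearMap.add_apply,
          ContinuousLinearMap.smul_apply, ContinuousLinearMap.coe_fst', ContinuousLinearMap.coe_snd',
          ContinuousLinearMap.smulRight_apply, smul_eq_mul, Prod.mk.injEq]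
        norm_num
        refine ⟨by ring, by ring, by ring⟩
    rw [hL.fderiv, hval]
  -- T1 : the x-partial at the origin
  have hT1 : fderiv ℝ (f δ) (0, 0) (1, 0) =
      ((1 - (2*δ+1)*α*α : ℝ), (-((2*δ+1)*α*β) : ℝ), (-((2*δ+1)*α*γ) : ℝ)) := by
    rw [hFeq]
    obtain ⟨L, hL, hval⟩ : ∃ L : ℝ × ℝ →L[ℝ] ℝ × ℝ × ℝ,
        HasFDerivAt (fun v : ℝ × ℝ => (v.1 + (((α * v.1 + β * (v.1 * v.2 + p v.2) + γ * (a * v.1 ^ 2 + b * v.1 * v.2 + v.2 ^ 2 + q v)) - δ) * ((α * v.1 + β * (v.1 * v.2 + p v.2) + γ * (a * v.1 ^ 2 + b * v.1 * v.2 + v.2 ^ 2 + q v)) - δ - 1)) * α, v.1 * v.2 + p v.2 + (((α * v.1 + β * (v.1 * v.2 + p v.2) + γ * (a * v.1 ^ 2 + b * v.1 * v.2 + v.2 ^ 2 + q v)) - δ) * ((α * v.1 + β * (v.1 * v.2 + p v.2) + γ * (a * v.1 ^ 2 + b * v.1 * v.2 + v.2 ^ 2 + q v)) - δ - 1)) *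 β, a * v.1 ^ 2 + b * v.1 * v.2 + v.2 ^ 2 + q v + (((α * v.1 + β * (v.1 * v.2 + p v.2) + γ * (a * v.1 ^ 2 + b * v.1 * v.2 + v.2 ^ 2 + q v)) - δ) * ((α * v.1 + β * (v.1 * v.2 + p v.2) + γ * (a * v.1 ^ 2 + b * v.1 * v.2 + v.2 ^ 2 + q v)) - δ - 1)) * γ)) L ((0, 0) : ℝ × ℝ) ∧ L (1, 0) =
          ((1 - (2*δ+1)*α*α : ℝ), (-((2*δ+1)*α*β) : ℝ), (-((2*δ+1)*α*γ) : ℝ)) := by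
      have hfst : HasFDerivAt Prod.fst (ContinuousLinearMap.fst ℝ ℝ ℝ) ((0, 0) : ℝ × ℝ) :=
        hasFDerivAt_fst
      have hsnd : HasFDerivAt Prod.snd (ContinuousLinearMap.snd ℝ ℝ ℝ) ((0, 0) : ℝ × ℝ) :=
        hasFDerivAt_snd
      have hPd := (hfst.mul hsnd).add
        (((hpd ((0, 0) : ℝ × ℝ).2).hasDerivAt).comp_hasFDerivAt ((0, 0) : ℝ × ℝ) hsnd)
      have hRd := ((((hasDerivAt_pow 2 ((0, 0) : ℝ × ℝ).1).comp_hasFDerivAt ((0, 0) : ℝ × ℝ) hfst).const_mul a).add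
        ((hfst.const_mul b).mul hsnd)).add
        ((hasDerivAt_pow 2 ((0, 0) : ℝ × ℝ).2).comp_hasFDerivAt ((0, 0) : ℝ × ℝ) hsnd) |>.add
          (hqd ((0, 0) : ℝ × ℝ)).hasFDerivAt
      have hGd := ((hfst.const_mul α).add (hPd.const_mul β)).add (hRd.const_mul γ)
      have hHd := (hGd.sub_const δ).mul ((hGd.sub_const δ).sub_const 1)
      refine ⟨_, (hfst.add (hHd.mul_const α)).prodMk
        ((hPd.add (hHd.mul_const β)).prodMk (hRd.add (hHd.mul_const γ))), ?_⟩
      simp only [ContinuousLinearMap.prod_apply, ContinuousLinearMap.add_apply,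
        ContinuousLinearMap.smul_apply, ContinuousLinearMap.coe_fst', ContinuousLinearMap.coe_snd',
        ContinuousLinearMap.smulRight_apply, ContinuousLinearMap.comp_apply,
        ContinuousLinearMap.flip_apply, ContinuousLinearMap.zero_apply,
        ContinuousLinearMap.zero_comp, ContinuousLinearMap.comp_zero,
        Function.comp_apply, hp0, hp1, hp2, hq0', hq1', hq2', Prod.mk.injEq]
      norm_num [Function.comp_apply, hp0, hp1, hp2, hq0', hq1', hq2']
      all_goals try refine ⟨?_, ?_, ?_⟩
      all_goals try ring
    rw [hL.fderiv, hval]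
  -- T2 and T3 : derivatives of the y-partial at the origin
  obtain ⟨L2, hL2, h10, h01⟩ : ∃ L2 : ℝ × ℝ →L[ℝ] ℝ × ℝ × ℝ,
      HasFDerivAt (fun v : ℝ × ℝ => (((((α * v.1 + β * (v.1 * v.2 + p v.2) + γ * (a * v.1 ^ 2 + b * v.1 * v.2 + v.2 ^ 2 + q v)) - δ) * (β * (v.1 + deriv p v.2) + γ * (b * v.1 + 2 * v.2 + fderiv ℝ q v (0, 1))) + ((α * v.1 + β * (v.1 * v.2 + p v.2) + γ * (a * v.1 ^ 2 + b * v.1 * v.2 + v.2 ^ 2 + q v)) - δ - 1) * (β * (v.1 + deriv p v.2) + γ * (b * v.1 + 2 * v.2 + fderiv ℝ q v (0, 1)))) * α : ℝ), ((v.1 + deriv p v.2) + (((α * v.1 + β * (v.1 * v.2 + p v.2) + γ * (a * v.1 ^ 2 + b * v.1 * v.2 + v.2 ^ 2 + q v)) - δ) * (β * (v.1 + deriv p v.2) + γ * (b * v.1 + 2 * v.2 + fderiv ℝ q v (0, 1))) + ((α * v.1 + β * (v.1 * v.2 + p v.2) + γ * (a * v.1 ^ 2 + b * v.1 * v.2 +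 v.2 ^ 2 + q v)) - δ - 1) * (β * (v.1 + deriv p v.2) + γ * (b * v.1 + 2 * v.2 + fderiv ℝ q v (0, 1)))) * β : ℝ), ((b * v.1 + 2 * v.2 + fderiv ℝ q v (0, 1)) + (((α * v.1 + β * (v.1 * v.2 + p v.2) + γ * (a * v.1 ^ 2 + b * v.1 * v.2 + v.2 ^ 2 + q v)) - δ) * (β * (v.1 + deriv p v.2) + γ * (b * v.1 + 2 * v.2 + fderiv ℝ q v (0, 1))) + ((α * v.1 + β * (v.1 * v.2 + p v.2) + γ * (a * v.1 ^ 2 + b * v.1 * v.2 + v.2 ^ 2 + q v)) - δ - 1) * (β * (v.1 + deriv p v.2) + γ * (b * v.1 + 2 * v.2 + fderiv ℝ q v (0, 1)))) * γ : ℝ))) L2 ((0, 0) : ℝ × ℝ) ∧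
      L2 (1, 0) = ((-((2*δ+1)*(β+b*γ)*α) : ℝ), (1 - (2*δ+1)*(β+b*γ)*β : ℝ), (b - (2*δ+1)*(β+b*γ)*γ : ℝ)) ∧
      L2 (0, 1) = ((-(2*(2*δ+1)*γ*α) : ℝ), (-(2*(2*δ+1)*γ*β) : ℝ), (2 - 2*(2*δ+1)*γ*γ : ℝ)) := by
    have hfst : HasFDerivAt Prod.fst (ContinuousLinearMap.fst ℝ ℝ ℝ) ((0, 0) : ℝ × ℝ) :=
      hasFDerivAt_fst
    have hsnd : HasFDerivAt Prod.snd (ContinuousLinearMap.snd ℝ ℝ ℝ) ((0, 0) : ℝ × ℝ) :=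
      hasFDerivAt_snd
    have hPd := (hfst.mul hsnd).add
      (((hpd ((0, 0) : ℝ × ℝ).2).hasDerivAt).comp_hasFDerivAt ((0, 0) : ℝ × ℝ) hsnd)
    have hRd := ((((hasDerivAt_pow 2 ((0, 0) : ℝ × ℝ).1).comp_hasFDerivAt ((0, 0) : ℝ × ℝ) hfst).const_mul a).add
      ((hfst.const_mul b).mul hsnd)).add
      ((hasDerivAt_pow 2 ((0, 0) : ℝ × ℝ).2).comp_hasFDerivAt ((0, 0) : ℝ × ℝ) hsnd) |>.add
        (hqd ((0, 0) : ℝ × ℝ)).hasFDerivAt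
    have hGd := ((hfst.const_mul α).add (hPd.const_mul β)).add (hRd.const_mul γ)
    have hPYd := hfst.add (((hpd' ((0, 0) : ℝ × ℝ).2).hasDerivAt).comp_hasFDerivAt ((0, 0) : ℝ × ℝ) hsnd)
    have hQYd := ((hqd' ((0, 0) : ℝ × ℝ)).hasFDerivAt).clm_apply
      (hasFDerivAt_const ((0:ℝ), (1:ℝ)) ((0, 0) : ℝ × ℝ))
    have hRYd := ((hfst.const_mul b).add (hsnd.const_mul 2)).add hQYd
    have hGYd := (hPYd.const_mul β).add (hRYd.const_mul γ)
    have hHYd := ((hGd.sub_const δ).mul hGYd).add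
      (((hGd.sub_const δ).sub_const 1).mul hGYd)
    refine ⟨_, (hHYd.mul_const α).prodMk
      ((hPYd.add (hHYd.mul_const β)).prodMk (hRYd.add (hHYd.mul_const γ))), ?_, ?_⟩ <;>
    · simp only [ContinuousLinearMap.prod_apply, ContinuousLinearMap.add_apply,
        ContinuousLinearMap.smul_apply, ContinuousLinearMap.coe_fst', ContinuousLinearMap.coe_snd',
        ContinuousLinearMap.smulRight_apply, ContinuousLinearMap.comp_apply,
        ContinuousLinearMap.flip_apply, ContinuousLinearMap.zero_apply, smul_eq_mul,
        ContinuousLinearMap.zero_comp, ContinuousLinearMap.comp_zero,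
        Function.comp_apply, hp0, hp1, hp2, hq0', hq1', hq2', Prod.mk.injEq]
      norm_num [Function.comp_apply, hp0, hp1, hp2, hq0', hq1', hq2']
      all_goals try refine ⟨?_, ?_, ?_⟩
      all_goals try ring
  have hT2 : fderiv ℝ (fun v => fderiv ℝ (f δ) v (0, 1)) (0, 0) (1, 0) =
      ((-((2*δ+1)*(β+b*γ)*α) : ℝ), (1 - (2*δ+1)*(β+b*γ)*β : ℝ), (b - (2*δ+1)*(β+b*γ)*γ : ℝ)) := by
    rw [step1, hL2.fderiv, h10]
  have hT3 : fderiv ℝ (fun v => fderiv ℝ (f δ) v (0, 1)) (0, 0) (0, 1) =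
      ((-(2*(2*δ+1)*γ*α) : ℝ), (-(2*(2*δ+1)*γ*β) : ℝ), (2 - 2*(2*δ+1)*γ*γ : ℝ)) := by
    rw [step1, hL2.fderiv, h01]
  rw [hT1, hT2, hT3]
  -- linear independence via explicit algebra
  rw [Fintype.linearIndependent_iff]
  intro k hsum
  simp only [Fin.sum_univ_three, Matrix.cons_val_zero, Matrix.cons_val_one, Matrix.head_cons,
    Matrix.cons_val_two, Matrix.tail_cons, Prod.smul_mk, smul_eq_mul, Prod.mk_add_mk,
    Prod.mk_eq_zero, Prod.mk.injEq] at hsum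
  obtain ⟨hE1, hE2, hE3⟩ : (k 0 * (1 - (2*δ+1)*α*α) + k 1 * (-((2*δ+1)*(β+b*γ)*α)) + k 2 * (-(2*(2*δ+1)*γ*α)) = 0)
      ∧ (k 0 * (-((2*δ+1)*α*β)) + k 1 * (1 - (2*δ+1)*(β+b*γ)*β) + k 2 * (-(2*(2*δ+1)*γ*β)) = 0)
      ∧ (k 0 * (-((2*δ+1)*α*γ)) + k 1 * (b - (2*δ+1)*(β+b*γ)*γ) + k 2 * (2 - 2*(2*δ+1)*γ*γ) = 0) := by
    refine ⟨?_, ?_, ?_⟩ <;> linarith [hsum.1, hsum.2.1, hsum.2.2]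
  have hS' : (-2*δ) * (k 0 * α + k 1 * (β + b*γ) + 2 * k 2 * γ) = 0 := by
    linear_combination α*hE1 + β*hE2 + γ*hE3 +
      ((2*δ+1)*(k 0 * α + k 1 * (β + b*γ) + 2 * k 2 * γ))*hη
  have hS : k 0 * α + k 1 * (β + b*γ) + 2 * k 2 * γ = 0 := by
    rcases mul_eq_zero.1 hS' with h | h
    · exact absurd (by linarith : δ = 0) hδ
    · exact h
  have hk0 : k 0 = 0 := by linear_combination hE1 + ((2*δ+1)*α)*hS
  have hk1 : k 1 = 0 := by linear_combination hE2 + ((2*δ+1)*β)*hS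
  have hk2 : k 2 = 0 := by linear_combination (hE3 + ((2*δ+1)*γ)*hS - b*hk1)/2
  intro i
  fin_cases i
  · exact hk0
  · exact hk1
  · exact hk2
end

section
/- Let φ(x,y) = (x, xy + p₃y³ + O(y⁴), ax² + bxy + y² + O(3)) be a geometric cross-cap with a ≠ 0. Define the parabolic set in the source as the zero locus of the determinant of the second fundamental form (equivalently of LN − M² where L, M, N are second fundamental form coefficients). Then the 2-jet at the origin of the defining function of the parabolic set is a nondegenerate (Morse) quadratic form; it is negative definite or positive definite (isolated point) when a < 0, and indefinite (two transverse branches) when a > 0. -/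
set_option maxHeartbeats 1000000

open Asymptotics Filter
open scoped ContDiff Topology

/-- Cross product on ℝ³ (as ℝ × ℝ × ℝ). -/
noncomputable def cross3 (u v : ℝ × ℝ × ℝ) : ℝ × ℝ × ℝ :=
  (u.2.1 * v.2.2 - u.2.2 * v.2.1,
   u.2.2 * v.1 - u.1 * v.2.2,
   u.1 * v.2.1 - u.2.1 * v.1)

/-- Dot product on ℝ³ (as ℝ × ℝ × ℝ). -/
noncomputable def dot3 (u v : ℝ × ℝ × ℝ) : ℝ :=
  u.1 * v.1 + u.2.1 * v.2.1 + u.2.2 * v.2.2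

lemma jet1D (r : ℝ → ℝ) (hr : ContDiff ℝ ∞ r) (hO : r =O[nhds (0:ℝ)] fun t => t^3) :
    r 0 = 0 ∧ deriv r 0 = 0 ∧ deriv (deriv r) 0 = 0 := by
  obtain ⟨c, hc⟩ := hO.bound
  have hdiff : Differentiable ℝ r := hr.differentiable (by simp)
  have hdiff2 : Differentiable ℝ (deriv r) :=
    ((contDiff_infty_iff_deriv.mp hr).2).differentiable (by simp)
  have h0 : r 0 = 0 := by
    have h := hc.self_of_nhds
    norm_num at h
    exact h
  -- first derivative
  have hs1 : Tendsto (slope r 0) (𝓝[≠] (0:ℝ)) (𝓝 (deriv r 0)) :=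
    hasDerivAt_iff_tendsto_slope.mp (hdiff 0).hasDerivAt
  have hOslope : (slope r 0) =O[𝓝[≠] (0:ℝ)] fun t => t^2 := by
    rw [Asymptotics.isBigO_iff]
    refine ⟨c, ?_⟩
    filter_upwards [nhdsWithin_le_nhds hc, self_mem_nhdsWithin] with t ht ht0
    have ht0' : (t:ℝ) ≠ 0 := ht0
    rw [slope_def_field, h0, sub_zero, sub_zero, norm_div]
    rw [div_le_iff₀ (norm_pos_iff.mpr ht0')]
    calc ‖r t‖ ≤ c * ‖t^3‖ := ht
    _ = c * ‖t^2‖ * ‖t‖ := by simp only [norm_pow]; ring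
  have htend0 : Tendsto (slope r 0) (𝓝[≠] (0:ℝ)) (𝓝 0) := by
    refine hOslope.trans_tendsto ?_
    have : Tendsto (fun t:ℝ => t^2) (𝓝 0) (𝓝 0) := by
      simpa using (continuous_pow 2).tendsto (0:ℝ)
    exact this.mono_left nhdsWithin_le_nhds
  have h1 : deriv r 0 = 0 := tendsto_nhds_unique hs1 htend0
  -- second derivative via L'Hopital
  set cc := deriv (deriv r) 0 with hcc
  have hs2 : Tendsto (slope (deriv r) 0) (𝓝[≠] (0:ℝ)) (𝓝 cc) :=
    hasDerivAt_iff_tendsto_slope.mp (hdiff2 0).hasDerivAt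
  have hdiv : Tendsto (fun t => deriv r t / (2*t)) (𝓝[≠] (0:ℝ)) (𝓝 (cc/2)) := by
    have := hs2.div_const 2
    refine this.congr fun t => ?_
    rw [slope_def_field, h1, sub_zero, sub_zero]
    ring
  have hlh : Tendsto (fun t => r t / t^2) (𝓝[≠] (0:ℝ)) (𝓝 (cc/2)) := by
    apply HasDerivAt.lhopital_zero_nhdsNE (f' := deriv r) (g' := fun t => 2*t)
    · filter_upwards with t; exact (hdiff t).hasDerivAt
    · filter_upwards with t
      simpa using ((hasDerivAt_pow 2 t))
    · filter_upwards [self_mem_nhdsWithin] with t ht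
      simpa using (ht : (t:ℝ) ≠ 0)
    · have : Tendsto r (𝓝 0) (𝓝 0) := by
        have := hdiff.continuous.tendsto (0:ℝ); rwa [h0] at this
      exact this.mono_left nhdsWithin_le_nhds
    · have : Tendsto (fun t:ℝ => t^2) (𝓝 0) (𝓝 0) := by
        simpa using (continuous_pow 2).tendsto (0:ℝ)
      exact this.mono_left nhdsWithin_le_nhds
    · exact hdiv
  have hq0 : Tendsto (fun t => r t / t^2) (𝓝[≠] (0:ℝ)) (𝓝 0) := by
    have hO2 : (fun t => r t / t^2) =O[𝓝[≠] (0:ℝ)] fun t => t := by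
      rw [Asymptotics.isBigO_iff]
      refine ⟨c, ?_⟩
      filter_upwards [nhdsWithin_le_nhds hc, self_mem_nhdsWithin] with t ht ht0
      have ht0' : (t:ℝ) ≠ 0 := ht0
      rw [norm_div, div_le_iff₀ (norm_pos_iff.mpr (pow_ne_zero 2 ht0'))]
      calc ‖r t‖ ≤ c * ‖t^3‖ := ht
      _ = c * ‖t‖ * ‖t^2‖ := by simp only [norm_pow]; ring
    refine hO2.trans_tendsto (tendsto_id.mono_left nhdsWithin_le_nhds)
  have : cc/2 = 0 := tendsto_nhds_unique hlh hq0
  refine ⟨h0, h1, by linarith⟩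

lemma jet2D (q : ℝ×ℝ → ℝ) (hq : ContDiff ℝ (⊤ : ℕ∞) q) (hqO : q =O[nhds (0:ℝ×ℝ)] fun v => ‖v‖^3) :
    q 0 = 0 ∧ fderiv ℝ q 0 = 0 ∧
      ∀ e : ℝ×ℝ, fderiv ℝ (fun w => fderiv ℝ q w e) 0 = 0 := by
  have hq' : ContDiff ℝ ∞ q := hq.of_le (by simp)
  have hdq : Differentiable ℝ q := hq'.differentiable (by simp)
  have hCFq : ContDiff ℝ ∞ (fderiv ℝ q) := hq'.fderiv_right (by simp)
  have hdFq : Differentiable ℝ (fderiv ℝ q) := hCFq.differentiable (by simp)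
  set Q := fderiv ℝ (fderiv ℝ q) 0 with hQdef
  -- facts along each line
  have key : ∀ v : ℝ×ℝ, q 0 = 0 ∧ fderiv ℝ q 0 v = 0 ∧ Q v v = 0 := by
    intro v
    set r : ℝ → ℝ := fun t => q (t • v) with hrdef
    have hline : ∀ t : ℝ, HasDerivAt (fun t : ℝ => t • v) v t := by
      intro t
      simpa using (hasDerivAt_id t).smul_const v
    have hrC : ContDiff ℝ ∞ r := hq'.comp (contDiff_id.smul contDiff_const)
    have hrO : r =O[nhds (0:ℝ)] fun t => t^3 := by
      have htv : Tendsto (fun t : ℝ => t • v) (nhds 0) (nhds 0) := by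
        have : Tendsto (fun t : ℝ => t • v) (𝓝 0) (𝓝 ((0:ℝ) • v)) :=
          (continuous_id.smul (continuous_const (y := v))).tendsto (0:ℝ)
        rwa [zero_smul] at this
      have h1 : r =O[nhds (0:ℝ)] fun t => ‖t • v‖^3 := hqO.comp_tendsto htv
      refine h1.trans (Asymptotics.isBigO_iff.mpr ⟨‖v‖^3, ?_⟩)
      filter_upwards with t
      have h2 : ‖t • v‖ = |t| * ‖v‖ := by rw [norm_smul]; rfl
      rw [Real.norm_eq_abs, abs_of_nonneg (by positivity), Real.norm_eq_abs, abs_pow, h2]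
      exact le_of_eq (by ring)
    have hr1 : ∀ t, HasDerivAt r (fderiv ℝ q (t • v) v) t := fun t =>
      (hdq (t • v)).hasFDerivAt.comp_hasDerivAt t (hline t)
    have hderiv_r : deriv r = fun t => fderiv ℝ q (t • v) v :=
      funext fun t => (hr1 t).deriv
    have hr2 : HasDerivAt (deriv r) (Q v v) 0 := by
      rw [hderiv_r]
      have happ : HasFDerivAt (fun w : ℝ×ℝ => fderiv ℝ q w v)
          ((ContinuousLinearMap.apply ℝ ℝ v).comp Q) 0 :=
        (ContinuousLinearMap.apply ℝ ℝ v).hasFDerivAt.comp 0 (hdFq 0).hasFDerivAt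
      rw [show (0:ℝ×ℝ) = (0:ℝ) • v from (zero_smul ℝ v).symm] at happ
      have := happ.comp_hasDerivAt 0 (hline 0)
      exact this
    obtain ⟨e0, e1, e2⟩ := jet1D r hrC hrO
    refine ⟨by rw [hrdef] at e0; simpa [zero_smul] using e0, ?_, ?_⟩
    · have := (hr1 0).deriv
      rw [e1] at this
      simpa [zero_smul] using this.symm
    · rw [← hr2.deriv, e2]
  have hq0 : q 0 = 0 := (key 0).1
  have hdq0 : fderiv ℝ q 0 = 0 := by
    ext
    · simpa using (key (1,0)).2.1
    · simpa using (key (0,1)).2.1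
  have hsymm : IsSymmSndFDerivAt ℝ q 0 := hq.contDiffAt.isSymmSndFDerivAt (by rw [minSmoothness_of_isRCLikeNormedField]; exact ENat.LEInfty.out)
  have hQ0 : Q = 0 := by
    have hpolar : ∀ v w : ℝ×ℝ, Q v w = 0 := by
      intro v w
      have h1 : Q (v+w) (v+w) = 0 := (key (v+w)).2.2
      have h2 : Q v v = 0 := (key v).2.2
      have h3 : Q w w = 0 := (key w).2.2
      have hsym : Q v w = Q w v := hsymm.eq v w
      simp only [map_add, ContinuousLinearMap.add_apply] at h1
      linarith
    ext
    · simpa using hpolar (1,0) (1,0)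
    all_goals simp_all [hpolar]
  refine ⟨hq0, hdq0, fun e => ?_⟩
  have happ : HasFDerivAt (fun w : ℝ×ℝ => fderiv ℝ q w e)
      ((ContinuousLinearMap.apply ℝ ℝ e).comp Q) 0 :=
    (ContinuousLinearMap.apply ℝ ℝ e).hasFDerivAt.comp 0 (hdFq 0).hasFDerivAt
  rw [happ.fderiv, hQ0]
  simp

theorem stmt17 (a b p₃ : ℝ) (ha : a ≠ 0)
    (p : ℝ → ℝ) (q : ℝ × ℝ → ℝ)
    (hp : ContDiff ℝ (⊤ : ℕ∞) p) (hq : ContDiff ℝ (⊤ : ℕ∞) q)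
    (hpO : (fun y => p y - p₃ * y ^ 3) =O[nhds (0 : ℝ)] fun y => y ^ 4)
    (hqO : q =O[nhds (0 : ℝ × ℝ)] fun v => ‖v‖ ^ 3)
    (φ : ℝ × ℝ → ℝ × ℝ × ℝ)
    (hφ : φ = fun v => (v.1, v.1 * v.2 + p v.2,
      a * v.1 ^ 2 + b * v.1 * v.2 + v.2 ^ 2 + q v))
    (φx φy φxx φxy φyy : ℝ × ℝ → ℝ × ℝ × ℝ)
    (hφx : φx = fun v => fderiv ℝ φ v (1, 0))
    (hφy : φy = fun v => fderiv ℝ φ v (0, 1))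
    (hφxx : φxx = fun v => fderiv ℝ φx v (1, 0))
    (hφxy : φxy = fun v => fderiv ℝ φx v (0, 1))
    (hφyy : φyy = fun v => fderiv ℝ φy v (0, 1))
    -- second fundamental form coefficients w.r.t. the unnormalized normal,
    -- and the defining function of the parabolic set in the source
    (L M N P : ℝ × ℝ → ℝ)
    (hL : L = fun v => dot3 (φxx v) (cross3 (φx v) (φy v)))
    (hM : M = fun v => dot3 (φxy v) (cross3 (φx v) (φy v)))
    (hN : N = fun v => dot3 (φyy v) (cross3 (φx v) (φy v)))
    (hP : P = fun v => L v * N v - M v ^ 2)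
    -- the Hessian entries of P at the origin
    (A B C : ℝ)
    (hA : A = fderiv ℝ (fun v => fderiv ℝ P v (1, 0)) (0, 0) (1, 0))
    (hB : B = fderiv ℝ (fun v => fderiv ℝ P v (1, 0)) (0, 0) (0, 1))
    (hC : C = fderiv ℝ (fun v => fderiv ℝ P v (0, 1)) (0, 0) (0, 1)) :
    P (0, 0) = 0 ∧ fderiv ℝ P (0, 0) = 0 ∧
    A * C - B ^ 2 ≠ 0 ∧
    (a < 0 → A * C - B ^ 2 > 0) ∧
    (a > 0 → A * C - B ^ 2 < 0) := by
  -- basic smoothness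
  have hp' : ContDiff ℝ ∞ p := hp.of_le (by simp)
  have hq' : ContDiff ℝ ∞ q := hq.of_le (by simp)
  have hpd : Differentiable ℝ p := hp'.differentiable (by simp)
  have hqd : Differentiable ℝ q := hq'.differentiable (by simp)
  -- p1 = deriv p, p2 = deriv (deriv p)
  obtain ⟨p1, hp1⟩ : ∃ p1 : ℝ → ℝ, p1 = deriv p := ⟨_, rfl⟩
  obtain ⟨p2, hp2⟩ : ∃ p2 : ℝ → ℝ, p2 = deriv p1 := ⟨_, rfl⟩
  have hp1C : ContDiff ℝ ∞ p1 := by rw [hp1]; exact (contDiff_infty_iff_deriv.mp hp').2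
  have hp2C : ContDiff ℝ ∞ p2 := by rw [hp2]; exact (contDiff_infty_iff_deriv.mp hp1C).2
  have hp1d : Differentiable ℝ p1 := hp1C.differentiable (by simp)
  have hp2d : Differentiable ℝ p2 := hp2C.differentiable (by simp)
  -- 2-jet of p vanishes at 0
  have hO43 : (fun y:ℝ => y^4) =O[nhds (0:ℝ)] fun y => y^3 := by
    rw [Asymptotics.isBigO_iff]
    refine ⟨1, ?_⟩
    filter_upwards [eventually_abs_sub_lt (0:ℝ) one_pos] with y hy
    rw [sub_zero] at hy
    rw [Real.norm_eq_abs, Real.norm_eq_abs, abs_pow, abs_pow, one_mul]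
    calc |y|^4 = |y|^3 * |y| := by ring
    _ ≤ |y|^3 * 1 := by nlinarith [abs_nonneg y, pow_nonneg (abs_nonneg y) 3]
    _ = |y|^3 := mul_one _
  obtain ⟨e0, e1, e2⟩ := jet1D (fun y => p y - p₃ * y ^ 3)
    (hp'.sub (by fun_prop)) (hpO.trans hO43)
  have hder_r : deriv (fun y => p y - p₃ * y ^ 3) = fun y => deriv p y - p₃*(3*y^2) := by
    funext y
    have h := ((hpd y).hasDerivAt.sub (HasDerivAt.const_mul p₃ (hasDerivAt_pow 3 y))).deriv
    rw [show (fun y => p y - p₃ * y ^ 3) = (p - fun y => p₃ * y ^ 3) from rfl, h]; norm_num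
  have hp10 : p1 0 = 0 := by
    rw [hder_r] at e1
    norm_num at e1
    rw [hp1]; exact e1
  have hp20 : p2 0 = 0 := by
    rw [hder_r, ← hp1] at e2
    have h := ((hp1d 0).hasDerivAt.sub
      (HasDerivAt.const_mul p₃ (HasDerivAt.const_mul 3 (hasDerivAt_pow 2 (0:ℝ))))).deriv
    rw [show (fun y => p1 y - p₃ * (3 * y ^ 2)) = (p1 - fun y => p₃ * (3 * y ^ 2)) from rfl, h] at e2
    norm_num at e2
    rw [hp2]; exact e2
  -- 2-jet of q vanishes at 0
  obtain ⟨hq0, hdq0, hQe⟩ := jet2D q hq hqO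
  -- main function names
  obtain ⟨f, hf⟩ : ∃ f : ℝ×ℝ → ℝ,
    f = fun v => a*v.1^2 + b*v.1*v.2 + v.2^2 + q v := ⟨_, rfl⟩
  obtain ⟨fX, hfX⟩ : ∃ g : ℝ×ℝ → ℝ, g = fun v => fderiv ℝ f v (1,0) := ⟨_, rfl⟩
  obtain ⟨fY, hfY⟩ : ∃ g : ℝ×ℝ → ℝ, g = fun v => fderiv ℝ f v (0,1) := ⟨_, rfl⟩
  obtain ⟨fXX, hfXX⟩ : ∃ g : ℝ×ℝ → ℝ, g = fun v => fderiv ℝ fX v (1,0) := ⟨_, rfl⟩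
  obtain ⟨fXY, hfXY⟩ : ∃ g : ℝ×ℝ → ℝ, g = fun v => fderiv ℝ fX v (0,1) := ⟨_, rfl⟩
  obtain ⟨fYY, hfYY⟩ : ∃ g : ℝ×ℝ → ℝ, g = fun v => fderiv ℝ fY v (0,1) := ⟨_, rfl⟩
  obtain ⟨gy, hgy⟩ : ∃ g : ℝ×ℝ → ℝ, g = fun v => v.1 + p1 v.2 := ⟨_, rfl⟩
  obtain ⟨u, hu⟩ : ∃ g : ℝ×ℝ → ℝ, g = fun v => fXX v * gy v := ⟨_, rfl⟩
  obtain ⟨w, hw⟩ : ∃ g : ℝ×ℝ → ℝ,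
    g = fun v => fYY v * gy v - p2 v.2 * fY v := ⟨_, rfl⟩
  obtain ⟨s, hs⟩ : ∃ g : ℝ×ℝ → ℝ, g = fun v => fXY v * gy v - fY v := ⟨_, rfl⟩
  -- smoothness of everything
  have hfC : ContDiff ℝ ∞ f := by rw [hf]; fun_prop
  have hfd : Differentiable ℝ f := hfC.differentiable (by simp)
  have hfXC : ContDiff ℝ ∞ fX := by
    rw [hfX]; exact (hfC.fderiv_right (by simp)).clm_apply contDiff_const
  have hfYC : ContDiff ℝ ∞ fY := by
    rw [hfY]; exact (hfC.fderiv_right (by simp)).clm_apply contDiff_const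
  have hfXd : Differentiable ℝ fX := hfXC.differentiable (by simp)
  have hfYd : Differentiable ℝ fY := hfYC.differentiable (by simp)
  have hfXXC : ContDiff ℝ ∞ fXX := by
    rw [hfXX]; exact (hfXC.fderiv_right (by simp)).clm_apply contDiff_const
  have hfXYC : ContDiff ℝ ∞ fXY := by
    rw [hfXY]; exact (hfXC.fderiv_right (by simp)).clm_apply contDiff_const
  have hfYYC : ContDiff ℝ ∞ fYY := by
    rw [hfYY]; exact (hfYC.fderiv_right (by simp)).clm_apply contDiff_const
  have hgyC : ContDiff ℝ ∞ gy := by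
    rw [hgy]; exact contDiff_fst.add (hp1C.comp contDiff_snd)
  have huC : ContDiff ℝ ∞ u := by rw [hu]; exact hfXXC.mul hgyC
  have hwC : ContDiff ℝ ∞ w := by
    rw [hw]; exact (hfYYC.mul hgyC).sub ((hp2C.comp contDiff_snd).mul hfYC)
  have hsC : ContDiff ℝ ∞ s := by rw [hs]; exact (hfXYC.mul hgyC).sub hfYC
  have hud : Differentiable ℝ u := huC.differentiable (by simp)
  have hwd : Differentiable ℝ w := hwC.differentiable (by simp)
  have hsd : Differentiable ℝ s := hsC.differentiable (by simp)
  -- the derivative of gy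
  have hgy' : ∀ v : ℝ×ℝ, HasFDerivAt gy
      (ContinuousLinearMap.fst ℝ ℝ ℝ + p2 v.2 • ContinuousLinearMap.snd ℝ ℝ ℝ) v := by
    intro v
    rw [hgy, hp2]
    exact hasFDerivAt_fst.add ((hp1d v.2).hasDerivAt.comp_hasFDerivAt v hasFDerivAt_snd)
  have hgy0 : gy 0 = 0 := by rw [hgy]; simp [hp10]
  -- closed forms of first partials of f
  have hfD : ∀ v : ℝ×ℝ, HasFDerivAt (fun v : ℝ×ℝ => a * v.1 ^ 2 + b * v.1 * v.2 + v.2 ^ 2 + q v)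
      (((a * (2 * v.1 ^ 1)) • ContinuousLinearMap.fst ℝ ℝ ℝ
        + ((b * v.1) • ContinuousLinearMap.snd ℝ ℝ ℝ + v.2 • (b • ContinuousLinearMap.fst ℝ ℝ ℝ))
        + (2 * v.2 ^ 1) • ContinuousLinearMap.snd ℝ ℝ ℝ) + fderiv ℝ q v) v := by
    intro v
    have h1a : HasFDerivAt (fun v : ℝ×ℝ => a * v.1 ^ 2)
        ((a * (2 * v.1 ^ 1)) • ContinuousLinearMap.fst ℝ ℝ ℝ) v :=
      (HasDerivAt.const_mul a (hasDerivAt_pow 2 v.1)).comp_hasFDerivAt v hasFDerivAt_fst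
    have h1b : HasFDerivAt (fun v : ℝ×ℝ => b * v.1 * v.2)
        ((b * v.1) • ContinuousLinearMap.snd ℝ ℝ ℝ + v.2 • (b • ContinuousLinearMap.fst ℝ ℝ ℝ)) v :=
      (hasFDerivAt_fst.const_mul b).mul hasFDerivAt_snd
    have h1c : HasFDerivAt (fun v : ℝ×ℝ => v.2 ^ 2)
        ((2 * v.2 ^ 1) • ContinuousLinearMap.snd ℝ ℝ ℝ) v :=
      (hasDerivAt_pow 2 v.2).comp_hasFDerivAt v hasFDerivAt_snd
    exact ((h1a.add h1b).add h1c).add (hqd v).hasFDerivAt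
  have hfXeq : fX = fun v => 2*a*v.1 + b*v.2 + fderiv ℝ q v (1,0) := by
    funext v
    rw [hfX]
    simp only [hf]
    rw [(hfD v).fderiv]
    simp
    ring
  have hfYeq : fY = fun v => b*v.1 + 2*v.2 + fderiv ℝ q v (0,1) := by
    funext v
    rw [hfY]
    simp only [hf]
    rw [(hfD v).fderiv]
    simp
  -- values of second partials of f at 0
  have hfY0 : fY 0 = 0 := by rw [hfYeq]; simp [hdq0]
  have hqXC : ContDiff ℝ ∞ (fun v => fderiv ℝ q v ((1:ℝ),(0:ℝ))) :=
    (hq'.fderiv_right (by simp)).clm_apply contDiff_const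
  have hqYC : ContDiff ℝ ∞ (fun v => fderiv ℝ q v ((0:ℝ),(1:ℝ))) :=
    (hq'.fderiv_right (by simp)).clm_apply contDiff_const
  have hqXd : Differentiable ℝ (fun v => fderiv ℝ q v ((1:ℝ),(0:ℝ))) :=
    ContDiff.differentiable hqXC (by simp)
  have hqYd : Differentiable ℝ (fun v => fderiv ℝ q v ((0:ℝ),(1:ℝ))) :=
    ContDiff.differentiable hqYC (by simp)
  have hqX0 : HasFDerivAt (fun v => fderiv ℝ q v ((1:ℝ),(0:ℝ))) (0 : ℝ×ℝ →L[ℝ] ℝ) 0 := by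
    have h := (hqXd 0).hasFDerivAt
    rwa [hQe ((1:ℝ),(0:ℝ))] at h
  have hqY0 : HasFDerivAt (fun v => fderiv ℝ q v ((0:ℝ),(1:ℝ))) (0 : ℝ×ℝ →L[ℝ] ℝ) 0 := by
    have h := (hqYd 0).hasFDerivAt
    rwa [hQe ((0:ℝ),(1:ℝ))] at h
  have hfXD0 : HasFDerivAt (fun v : ℝ×ℝ => 2*a*v.1 + b*v.2 + fderiv ℝ q v (1,0))
      (((2*a) • ContinuousLinearMap.fst ℝ ℝ ℝ
        + b • ContinuousLinearMap.snd ℝ ℝ ℝ) + 0) 0 :=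
    ((hasFDerivAt_fst.const_mul (2*a)).add (hasFDerivAt_snd.const_mul b)).add hqX0
  have hfYD0 : HasFDerivAt (fun v : ℝ×ℝ => b*v.1 + 2*v.2 + fderiv ℝ q v (0,1))
      ((b • ContinuousLinearMap.fst ℝ ℝ ℝ
        + (2:ℝ) • ContinuousLinearMap.snd ℝ ℝ ℝ) + 0) 0 :=
    ((hasFDerivAt_fst.const_mul b).add (hasFDerivAt_snd.const_mul 2)).add hqY0
  have hDfY0 : ∀ e : ℝ×ℝ, fderiv ℝ fY 0 e = b*e.1 + 2*e.2 := by
    intro e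
    rw [hfYeq, hfYD0.fderiv]
    simp
  have hDfX0 : ∀ e : ℝ×ℝ, fderiv ℝ fX 0 e = 2*a*e.1 + b*e.2 := by
    intro e
    rw [hfXeq, hfXD0.fderiv]
    simp
  have hfXX0 : fXX 0 = 2*a := by rw [hfXX]; simpa using hDfX0 (1,0)
  have hfXY0 : fXY 0 = b := by rw [hfXY]; simpa using hDfX0 (0,1)
  have hfYY0 : fYY 0 = 2 := by rw [hfYY]; simpa using hDfY0 (0,1)
  have hfXXd : Differentiable ℝ fXX := hfXXC.differentiable (by simp)
  have hfXYd : Differentiable ℝ fXY := hfXYC.differentiable (by simp)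
  have hfYYd : Differentiable ℝ fYY := hfYYC.differentiable (by simp)
  -- the jets of φ
  have hφD : ∀ v : ℝ×ℝ, HasFDerivAt φ
      ((ContinuousLinearMap.fst ℝ ℝ ℝ).prod
        (((v.1 • ContinuousLinearMap.snd ℝ ℝ ℝ + v.2 • ContinuousLinearMap.fst ℝ ℝ ℝ)
          + p1 v.2 • ContinuousLinearMap.snd ℝ ℝ ℝ).prod (fderiv ℝ f v))) v := by
    intro v
    rw [hφ, hf, hp1]
    have h2 : HasFDerivAt (fun v : ℝ×ℝ => v.1 * v.2 + p v.2)
        ((v.1 • ContinuousLinearMap.snd ℝ ℝ ℝ + v.2 • ContinuousLinearMap.fst ℝ ℝ ℝ)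
          + deriv p v.2 • ContinuousLinearMap.snd ℝ ℝ ℝ) v :=
      (hasFDerivAt_fst.mul hasFDerivAt_snd).add
        ((hpd v.2).hasDerivAt.comp_hasFDerivAt v hasFDerivAt_snd)
    have h3 : HasFDerivAt (fun v : ℝ×ℝ => a * v.1 ^ 2 + b * v.1 * v.2 + v.2 ^ 2 + q v)
        (fderiv ℝ (fun v : ℝ×ℝ => a * v.1 ^ 2 + b * v.1 * v.2 + v.2 ^ 2 + q v) v) v := by
      have := (hfd v).hasFDerivAt
      rwa [hf] at this
    exact HasFDerivAt.prodMk hasFDerivAt_fst (HasFDerivAt.prodMk h2 h3)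
  have hφxeq : φx = fun v => ((1:ℝ), v.2, fX v) := by
    rw [hφx]
    funext v
    rw [(hφD v).fderiv]
    simp [hfX]
  have hφyeq : φy = fun v => ((0:ℝ), gy v, fY v) := by
    rw [hφy]
    funext v
    rw [(hφD v).fderiv]
    simp [hfY, hgy]
  have hφxxeq : φxx = fun v => ((0:ℝ), (0:ℝ), fXX v) := by
    rw [hφxx, hφxeq]
    funext v
    have h1 : HasFDerivAt (fun v : ℝ×ℝ => ((1:ℝ), v.2, fX v))
        ((0 : ℝ×ℝ →L[ℝ] ℝ).prod ((ContinuousLinearMap.snd ℝ ℝ ℝ).prod (fderiv ℝ fX v))) v :=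
      HasFDerivAt.prodMk (hasFDerivAt_const (1:ℝ) v) (HasFDerivAt.prodMk hasFDerivAt_snd (hfXd v).hasFDerivAt)
    rw [h1.fderiv]
    simp [hfXX]
  have hφxyeq : φxy = fun v => ((0:ℝ), (1:ℝ), fXY v) := by
    rw [hφxy, hφxeq]
    funext v
    have h1 : HasFDerivAt (fun v : ℝ×ℝ => ((1:ℝ), v.2, fX v))
        ((0 : ℝ×ℝ →L[ℝ] ℝ).prod ((ContinuousLinearMap.snd ℝ ℝ ℝ).prod (fderiv ℝ fX v))) v :=
      HasFDerivAt.prodMk (hasFDerivAt_const (1:ℝ) v) (HasFDerivAt.prodMk hasFDerivAt_snd (hfXd v).hasFDerivAt)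
    rw [h1.fderiv]
    simp [hfXY]
  have hφyyeq : φyy = fun v => ((0:ℝ), p2 v.2, fYY v) := by
    rw [hφyy, hφyeq]
    funext v
    have h1 : HasFDerivAt (fun v : ℝ×ℝ => ((0:ℝ), gy v, fY v))
        ((0 : ℝ×ℝ →L[ℝ] ℝ).prod
          ((ContinuousLinearMap.fst ℝ ℝ ℝ + p2 v.2 • ContinuousLinearMap.snd ℝ ℝ ℝ).prod
            (fderiv ℝ fY v))) v :=
      HasFDerivAt.prodMk (hasFDerivAt_const (0:ℝ) v) (HasFDerivAt.prodMk (hgy' v) (hfYd v).hasFDerivAt)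
    rw [h1.fderiv]
    simp [hfYY]
  -- the parabolic defining function
  have hPeq : P = fun v => u v * w v - s v * s v := by
    rw [hP, hL, hM, hN]
    funext v
    simp only [hφxeq, hφyeq, hφxxeq, hφxyeq, hφyyeq, hu, hw, hs, hgy, cross3, dot3]
    ring
  -- values at 0
  have hu0 : u 0 = 0 := by rw [hu]; simp [hgy0]
  have hw0 : w 0 = 0 := by rw [hw]; simp [hgy0, hfY0, hp20]
  have hs0 : s 0 = 0 := by rw [hs]; simp [hgy0, hfY0]
  have hDu0 : ∀ e : ℝ×ℝ, fderiv ℝ u 0 e = 2*a*e.1 := by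
    intro e
    rw [hu]
    have h1 : HasFDerivAt (fun v => fXX v * gy v)
        (fXX 0 • (ContinuousLinearMap.fst ℝ ℝ ℝ + p2 (0:ℝ×ℝ).2 • ContinuousLinearMap.snd ℝ ℝ ℝ)
          + gy 0 • fderiv ℝ fXX 0) 0 :=
      (hfXXd 0).hasFDerivAt.mul (hgy' 0)
    rw [h1.fderiv]
    simp [hp20, hgy0, hfXX0]
  have hDw0 : ∀ e : ℝ×ℝ, fderiv ℝ w 0 e = 2*e.1 := by
    intro e
    rw [hw]
    have hps : HasFDerivAt (fun v : ℝ×ℝ => p2 v.2)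
        (deriv p2 (0:ℝ×ℝ).2 • ContinuousLinearMap.snd ℝ ℝ ℝ) 0 :=
      (hp2d (0:ℝ×ℝ).2).hasDerivAt.comp_hasFDerivAt 0 hasFDerivAt_snd
    have h1 : HasFDerivAt (fun v => fYY v * gy v - p2 v.2 * fY v)
        ((fYY 0 • (ContinuousLinearMap.fst ℝ ℝ ℝ + p2 (0:ℝ×ℝ).2 • ContinuousLinearMap.snd ℝ ℝ ℝ)
          + gy 0 • fderiv ℝ fYY 0)
         - (p2 (0:ℝ×ℝ).2 • fderiv ℝ fY 0
          + fY 0 • (deriv p2 (0:ℝ×ℝ).2 • ContinuousLinearMap.snd ℝ ℝ ℝ))) 0 :=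
      ((hfYYd 0).hasFDerivAt.mul (hgy' 0)).sub (hps.mul (hfYd 0).hasFDerivAt)
    rw [h1.fderiv]
    simp [hp20, hgy0, hfYY0, hfY0]
  have hDs0 : ∀ e : ℝ×ℝ, fderiv ℝ s 0 e = -(2*e.2) := by
    intro e
    rw [hs]
    have h1 : HasFDerivAt (fun v => fXY v * gy v - fY v)
        ((fXY 0 • (ContinuousLinearMap.fst ℝ ℝ ℝ + p2 (0:ℝ×ℝ).2 • ContinuousLinearMap.snd ℝ ℝ ℝ)
          + gy 0 • fderiv ℝ fXY 0) - fderiv ℝ fY 0) 0 :=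
      ((hfXYd 0).hasFDerivAt.mul (hgy' 0)).sub (hfYd 0).hasFDerivAt
    rw [h1.fderiv]
    simp [hp20, hgy0, hfXY0, hDfY0 e]
  -- first derivative of P
  have hDP : ∀ (v e : ℝ×ℝ), fderiv ℝ P v e
      = fderiv ℝ u v e * w v + u v * fderiv ℝ w v e - 2 * s v * fderiv ℝ s v e := by
    intro v e
    rw [hPeq]
    have h1 : HasFDerivAt (fun v => u v * w v - s v * s v)
        ((u v • fderiv ℝ w v + w v • fderiv ℝ u v)
          - (s v • fderiv ℝ s v + s v • fderiv ℝ s v)) v :=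
      ((hud v).hasFDerivAt.mul (hwd v).hasFDerivAt).sub
        ((hsd v).hasFDerivAt.mul (hsd v).hasFDerivAt)
    rw [h1.fderiv]
    simp only [ContinuousLinearMap.sub_apply, ContinuousLinearMap.add_apply,
      ContinuousLinearMap.smul_apply, smul_eq_mul]
    ring
  -- directional derivative functions
  obtain ⟨Dux, hDux⟩ : ∃ g : ℝ×ℝ → ℝ, g = fun v => fderiv ℝ u v (1,0) := ⟨_, rfl⟩
  obtain ⟨Duy, hDuy⟩ : ∃ g : ℝ×ℝ → ℝ, g = fun v => fderiv ℝ u v (0,1) := ⟨_, rfl⟩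
  obtain ⟨Dwx, hDwx⟩ : ∃ g : ℝ×ℝ → ℝ, g = fun v => fderiv ℝ w v (1,0) := ⟨_, rfl⟩
  obtain ⟨Dwy, hDwy⟩ : ∃ g : ℝ×ℝ → ℝ, g = fun v => fderiv ℝ w v (0,1) := ⟨_, rfl⟩
  obtain ⟨Dsx, hDsx⟩ : ∃ g : ℝ×ℝ → ℝ, g = fun v => fderiv ℝ s v (1,0) := ⟨_, rfl⟩
  obtain ⟨Dsy, hDsy⟩ : ∃ g : ℝ×ℝ → ℝ, g = fun v => fderiv ℝ s v (0,1) := ⟨_, rfl⟩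
  have hDuxC : ContDiff ℝ ∞ Dux := by
    rw [hDux]; exact (huC.fderiv_right (by simp)).clm_apply contDiff_const
  have hDuyC : ContDiff ℝ ∞ Duy := by
    rw [hDuy]; exact (huC.fderiv_right (by simp)).clm_apply contDiff_const
  have hDwxC : ContDiff ℝ ∞ Dwx := by
    rw [hDwx]; exact (hwC.fderiv_right (by simp)).clm_apply contDiff_const
  have hDwyC : ContDiff ℝ ∞ Dwy := by
    rw [hDwy]; exact (hwC.fderiv_right (by simp)).clm_apply contDiff_const
  have hDsxC : ContDiff ℝ ∞ Dsx := by
    rw [hDsx]; exact (hsC.fderiv_right (by simp)).clm_apply contDiff_const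
  have hDsyC : ContDiff ℝ ∞ Dsy := by
    rw [hDsy]; exact (hsC.fderiv_right (by simp)).clm_apply contDiff_const
  have hDuxd : Differentiable ℝ Dux := hDuxC.differentiable (by simp)
  have hDuyd : Differentiable ℝ Duy := hDuyC.differentiable (by simp)
  have hDwxd : Differentiable ℝ Dwx := hDwxC.differentiable (by simp)
  have hDwyd : Differentiable ℝ Dwy := hDwyC.differentiable (by simp)
  have hDsxd : Differentiable ℝ Dsx := hDsxC.differentiable (by simp)
  have hDsyd : Differentiable ℝ Dsy := hDsyC.differentiable (by simp)
  -- values of directional derivatives at 0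
  have hDux0 : Dux 0 = 2*a := by rw [hDux]; simpa using hDu0 (1,0)
  have hDuy0 : Duy 0 = 0 := by rw [hDuy]; simpa using hDu0 (0,1)
  have hDwx0 : Dwx 0 = 2 := by rw [hDwx]; simpa using hDw0 (1,0)
  have hDwy0 : Dwy 0 = 0 := by rw [hDwy]; simpa using hDw0 (0,1)
  have hDsx0 : Dsx 0 = 0 := by rw [hDsx]; simpa using hDs0 (1,0)
  have hDsy0 : Dsy 0 = -2 := by rw [hDsy]; simpa using hDs0 (0,1)
  -- gradient functions of P
  have hDPx : (fun v => fderiv ℝ P v (1,0))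
      = fun v => Dux v * w v + u v * Dwx v - 2 * s v * Dsx v := by
    funext v
    rw [hDP v (1,0), hDux, hDwx, hDsx]
  have hDPy : (fun v => fderiv ℝ P v (0,1))
      = fun v => Duy v * w v + u v * Dwy v - 2 * s v * Dsy v := by
    funext v
    rw [hDP v (0,1), hDuy, hDwy, hDsy]
  -- second derivatives
  have hHess : ∀ (X DX : ℝ×ℝ → ℝ) (Y DY : ℝ×ℝ → ℝ) (Z DZ : ℝ×ℝ → ℝ) (e : ℝ×ℝ),
      Differentiable ℝ X → Differentiable ℝ Y → Differentiable ℝ Z →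
      Differentiable ℝ DX → Differentiable ℝ DY → Differentiable ℝ DZ →
      X 0 = 0 → Y 0 = 0 → Z 0 = 0 →
      fderiv ℝ (fun v => DX v * X v + Y v * DY v - 2 * Z v * DZ v) 0 e
        = DX 0 * fderiv ℝ X 0 e + fderiv ℝ Y 0 e * DY 0 - 2 * fderiv ℝ Z 0 e * DZ 0 := by
    intro X DX Y DY Z DZ e hX hY hZ hDX hDY hDZ hX0 hY0 hZ0
    have h1 : HasFDerivAt (fun v => DX v * X v + Y v * DY v - 2 * Z v * DZ v)
        (((DX 0 • fderiv ℝ X 0 + X 0 • fderiv ℝ DX 0)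
          + (Y 0 • fderiv ℝ DY 0 + DY 0 • fderiv ℝ Y 0))
          - ((2 * Z 0) • fderiv ℝ DZ 0 + DZ 0 • ((2:ℝ) • fderiv ℝ Z 0))) 0 := by
      exact (((hDX 0).hasFDerivAt.mul (hX 0).hasFDerivAt).add
        ((hY 0).hasFDerivAt.mul (hDY 0).hasFDerivAt)).sub
        ((((hZ 0).hasFDerivAt.const_mul 2).mul (hDZ 0).hasFDerivAt))
    rw [h1.fderiv]
    simp only [ContinuousLinearMap.sub_apply, ContinuousLinearMap.add_apply,
      ContinuousLinearMap.smul_apply, smul_eq_mul, hX0, hY0, hZ0]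
    ring
  have hAval : A = 8*a := by
    rw [hA, hDPx, show ((0:ℝ),(0:ℝ)) = (0:ℝ×ℝ) from rfl]
    rw [hHess w Dux u Dwx s Dsx (1,0) hwd hud hsd hDuxd hDwxd hDsxd hw0 hu0 hs0]
    rw [hDux0, hDwx0, hDsx0, hDu0 (1,0), hDw0 (1,0), hDs0 (1,0)]
    norm_num
    ring
  have hBval : B = 0 := by
    rw [hB, hDPx, show ((0:ℝ),(0:ℝ)) = (0:ℝ×ℝ) from rfl]
    rw [hHess w Dux u Dwx s Dsx (0,1) hwd hud hsd hDuxd hDwxd hDsxd hw0 hu0 hs0]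
    rw [hDux0, hDwx0, hDsx0, hDu0 (0,1), hDw0 (0,1), hDs0 (0,1)]
    norm_num
  have hCval : C = -8 := by
    rw [hC, hDPy, show ((0:ℝ),(0:ℝ)) = (0:ℝ×ℝ) from rfl]
    rw [hHess w Duy u Dwy s Dsy (0,1) hwd hud hsd hDuyd hDwyd hDsyd hw0 hu0 hs0]
    rw [hDuy0, hDwy0, hDsy0, hDu0 (0,1), hDw0 (0,1), hDs0 (0,1)]
    norm_num
  -- conclusion
  refine ⟨?_, ?_, ?_, ?_, ?_⟩
  · rw [hPeq, show ((0:ℝ),(0:ℝ)) = (0:ℝ×ℝ) from rfl]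
    simp [hu0, hw0, hs0]
  · rw [show ((0:ℝ),(0:ℝ)) = (0:ℝ×ℝ) from rfl]
    apply ContinuousLinearMap.ext
    intro e
    rw [hDP 0 e]
    simp [hu0, hw0, hs0]
  · have hval : A * C - B ^ 2 = -64*a := by rw [hAval, hBval, hCval]; ring
    rw [hval]
    intro h
    apply ha
    linarith only [h]
  · have hval : A * C - B ^ 2 = -64*a := by rw [hAval, hBval, hCval]; ring
    rw [hval]
    intro h
    linarith only [h]
  · have hval : A * C - B ^ 2 = -64*a := by rw [hAval, hBval, hCval]; ring
    rw [hval]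
    intro h
    linarith only [h]
end
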